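/- For every integer n ≥ 0 and real t ∈ (0,1), the following two-sided bound holds: t · n!/(log(1/t))^{n+1} ≤ ∑_{a≥1} a^n t^a ≤ (1/t) · n!/(log(1/t))^{n+1}. -/

import Mathlib

/-!
With `c = log (1 / t)` we have `t ^ a = exp (-(c * a))`, and the Gamma integral gives
`∫₀^∞ x ^ n exp (-(c x)) dx = n! / c ^ (n + 1)`. On `[i, i + 1]` the factor `x ^ n` lies between
`i ^ n` and `(i + 1) ^ n` and `exp (-(c x))` between `exp (-(c (i + 1)))` and `exp (-(c i))`, so
comparing the series with the integral over unit intervals loses at most a factor `exp c = 1 / t`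
in either direction.
-/

open Real MeasureTheory Set Filter
open scoped Nat

lemma integral_pow_mul_exp_neg_mul_Ioi (n : ℕ) {c : ℝ} (hc : 0 < c) :
    ∫ x in Ioi (0 : ℝ), x ^ n * exp (-(c * x)) = n ! / c ^ (n + 1) := by
  have key := integral_rpow_mul_exp_neg_mul_Ioi (a := n + 1) (by positivity) hc
  simp only [add_sub_cancel_right, rpow_natCast] at key
  rw [key, Gamma_nat_eq_factorial, ← Nat.cast_add_one, rpow_natCast, one_div, inv_pow,
    inv_mul_eq_div]

lemma integrableOn_pow_mul_exp_neg_mul_Ioi (n : ℕ) {c : ℝ} (hc : 0 < c) :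
    IntegrableOn (fun x : ℝ => x ^ n * exp (-(c * x))) (Ioi 0) :=
  .of_integral_ne_zero (by rw [integral_pow_mul_exp_neg_mul_Ioi n hc]; positivity)

lemma summable_add_one_pow_mul_exp_neg_mul (n : ℕ) {c : ℝ} (hc : 0 < c) :
    Summable fun i : ℕ => ((i : ℝ) + 1) ^ n * exp (-(c * (i + 1))) := by
  simpa [neg_mul] using (summable_nat_add_iff 1).2 (summable_pow_mul_exp_neg_nat_mul n hc)

lemma factorial_div_pow_le_exp_mul_tsum (n : ℕ) {c : ℝ} (hc : 0 < c) :
    n ! / c ^ (n + 1) ≤ exp c * ∑' i : ℕ, ((i : ℝ) + 1) ^ n * exp (-(c * (i + 1))) := by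
  rw [← integral_pow_mul_exp_neg_mul_Ioi n hc]
  refine le_of_tendsto (intervalIntegral_tendsto_integral_Ioi 0
    (integrableOn_pow_mul_exp_neg_mul_Ioi n hc) tendsto_natCast_atTop_atTop)
    (Eventually.of_forall fun M => ?_)
  -- the comparison lemma pairs `f x` with `g (x - 1)`, hence the shift in `g x = (x + 1) ^ n`
  calc ∫ x in (0 : ℝ)..M, x ^ n * exp (-(c * x))
      = ∫ x in ((0 : ℕ) : ℝ)..M, exp (-(c * x)) * ((x - 1) + 1) ^ n := by
        simp only [sub_add_cancel, mul_comm, Nat.cast_zero]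
    _ ≤ ∑ i ∈ Finset.Ico 0 M, exp (-(c * i)) * ((i : ℝ) + 1) ^ n := by
        refine integral_le_sum_mul_Ico_of_antitone_monotone (f := fun x => exp (-(c * x)))
          (g := fun x => (x + 1) ^ n) (Nat.zero_le M) ?_ ?_ (exp_nonneg _) (by simp)
        · exact fun x _ y _ hxy => exp_le_exp.2 (by nlinarith)
        · exact fun x hx y _ hxy => pow_le_pow_left₀ (by linarith [hx.1]) (by linarith) n
    _ = exp c * ∑ i ∈ Finset.range M, ((i : ℝ) + 1) ^ n * exp (-(c * (i + 1))) := by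
        rw [← Finset.range_eq_Ico, Finset.mul_sum]
        refine Finset.sum_congr rfl fun i _ => ?_
        rw [mul_left_comm, ← exp_add]
        ring_nf
    _ ≤ exp c * ∑' i : ℕ, ((i : ℝ) + 1) ^ n * exp (-(c * (i + 1))) := by
        gcongr
        exact (summable_add_one_pow_mul_exp_neg_mul n hc).sum_le_tsum _
          fun i _ => by positivity

lemma tsum_add_one_pow_mul_exp_neg_mul_le (n : ℕ) {c : ℝ} (hc : 0 < c) :
    ∑' i : ℕ, ((i : ℝ) + 1) ^ n * exp (-(c * (i + 1))) ≤ exp c * n ! / c ^ (n + 1) := by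
  refine tsum_le_of_sum_range_le (fun _ => by positivity) fun N => ?_
  calc ∑ i ∈ Finset.range N, ((i : ℝ) + 1) ^ n * exp (-(c * (i + 1)))
      ≤ ∑ i ∈ Finset.Ico 0 (N + 1), (i : ℝ) ^ n * exp (-(c * i)) := by
        rw [← Finset.range_eq_Ico, Finset.sum_range_succ']
        push_cast
        exact le_add_of_nonneg_right (by positivity)
    _ ≤ exp c * n ! / c ^ (n + 1) := sum_Ico_pow_mul_exp_neg_le hc

theorem power_sum_log_bounds (n : ℕ) (t : ℝ) (ht : t ∈ Set.Ioo (0 : ℝ) 1) :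
    t * (Nat.factorial n : ℝ) / (Real.log (1 / t)) ^ (n + 1)
        ≤ ∑' a : ℕ, ((a : ℝ) + 1) ^ n * t ^ (a + 1)
      ∧ ∑' a : ℕ, ((a : ℝ) + 1) ^ n * t ^ (a + 1)
        ≤ (1 / t) * (Nat.factorial n : ℝ) / (Real.log (1 / t)) ^ (n + 1) := by
  obtain ⟨ht0, ht1⟩ := ht
  set c := log (1 / t)
  have hc : 0 < c := log_pos (one_lt_one_div ht0 ht1)
  have hexp : exp c = 1 / t := exp_log (by positivity)
  have hpow (k : ℕ) : t ^ k = exp (-(c * k)) := by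
    rw [mul_comm, neg_mul_eq_mul_neg, exp_nat_mul, exp_neg, hexp, one_div, inv_inv]
  simp only [hpow, Nat.cast_add_one, ← hexp]
  constructor
  · calc t * n ! / c ^ (n + 1) = t * (n ! / c ^ (n + 1)) := mul_div_assoc _ _ _
      _ ≤ t * (exp c * ∑' i : ℕ, ((i : ℝ) + 1) ^ n * exp (-(c * (i + 1)))) := by
          gcongr; exact factorial_div_pow_le_exp_mul_tsum n hc
      _ = _ := by rw [← mul_assoc, hexp, mul_one_div_cancel ht0.ne', one_mul]
  · exact tsum_add_one_pow_mul_exp_neg_mul_le n hc
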